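/- arXiv:1703.06513 — 4 statements merged into one kernel-verified Lean document; each statement's English description precedes it below -/
import Mathlib

section
/- For c, p, q in [0,1], the Bernoulli KL divergence satisfies d(c·p, c·q) ≤ c·d(p, q), where d(x,y) = x·log(x/y) + (1−x)·log((1−x)/(1−y)) (defined by continuous extension at the boundary). -/
open scoped BigOperators

/-- Bernoulli KL divergence `d(p,q)` with continuous extension to the boundary:
`⊤` when `q ∈ {0,1}` and `p ≠ q` there. -/
noncomputable def klBer (p q : ℝ) : EReal :=
  if (q = 0 ∧ p ≠ 0) ∨ (q = 1 ∧ p ≠ 1) then ⊤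
  else ((p * Real.log (p / q) + (1 - p) * Real.log ((1 - p) / (1 - q)) : ℝ) : EReal)

/-- Real-valued Bernoulli KL divergence formula (valid where finite). -/
noncomputable def klBerR (p q : ℝ) : ℝ :=
  p * Real.log (p / q) + (1 - p) * Real.log ((1 - p) / (1 - q))

/-!
Write `1 - c * p = c * (1 - p) + (1 - c)` and `1 - c * q = c * (1 - q) + (1 - c)`. The first
summand of `d(c p, c q)` is exactly `c · p log (p / q)`, and the two-term log-sum inequality
bounds the second by `c (1 - p) log ((1 - p) / (1 - q)) + (1 - c) log ((1 - c) / (1 - c))`,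
whose last term vanishes. The boundary cases are either infinite on the right or reduce to
the same computation.
-/

open Real

lemma sub_le_mul_log_div {a b : ℝ} (ha : 0 ≤ a) (hb : 0 < b) : a - b ≤ a * log (a / b) := by
  have h := self_sub_one_le_mul_log (div_nonneg ha hb.le)
  have hab : b * (a / b) = a := mul_div_cancel₀ a hb.ne'
  calc a - b = b * (a / b - 1) := by rw [mul_sub, hab, mul_one]
    _ ≤ b * (a / b * log (a / b)) := mul_le_mul_of_nonneg_left h hb.le
    _ = a * log (a / b) := by rw [← mul_assoc, hab]

lemma mul_log_add_sub_le_mul_log_div {a b r : ℝ} (ha : 0 ≤ a) (hb : 0 < b) (hr : 0 < r) :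
    a * log r + (a - b * r) ≤ a * log (a / b) := by
  rcases ha.eq_or_lt with rfl | ha
  · simpa using (mul_pos hb hr).le
  have h := sub_le_mul_log_div ha.le (mul_pos hb hr)
  rw [← div_div, log_div (div_pos ha hb).ne' hr.ne'] at h
  linarith

lemma add_mul_log_div_add_le {a₁ a₂ b₁ b₂ : ℝ} (ha₁ : 0 ≤ a₁) (ha₂ : 0 ≤ a₂)
    (hb₁ : 0 < b₁) (hb₂ : 0 < b₂) :
    (a₁ + a₂) * log ((a₁ + a₂) / (b₁ + b₂)) ≤ a₁ * log (a₁ / b₁) + a₂ * log (a₂ / b₂) := by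
  set r := (a₁ + a₂) / (b₁ + b₂)
  rcases (add_nonneg ha₁ ha₂).eq_or_lt with hA | hA
  · obtain ⟨rfl, rfl⟩ : a₁ = 0 ∧ a₂ = 0 := ⟨by linarith, by linarith⟩
    simp
  have hr : 0 < r := div_pos hA (add_pos hb₁ hb₂)
  have hbr : (b₁ + b₂) * r = a₁ + a₂ := mul_div_cancel₀ _ (add_pos hb₁ hb₂).ne'
  have h₁ := mul_log_add_sub_le_mul_log_div ha₁ hb₁ hr
  have h₂ := mul_log_add_sub_le_mul_log_div ha₂ hb₂ hr
  linarith

lemma add_mul_log_div_add_le_of_imp {a₁ a₂ b₁ b₂ : ℝ} (ha₁ : 0 ≤ a₁) (ha₂ : 0 ≤ a₂)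
    (hb₁ : 0 ≤ b₁) (hb₂ : 0 ≤ b₂) (h₁ : b₁ = 0 → a₁ = 0) (h₂ : b₂ = 0 → a₂ = 0) :
    (a₁ + a₂) * log ((a₁ + a₂) / (b₁ + b₂)) ≤ a₁ * log (a₁ / b₁) + a₂ * log (a₂ / b₂) := by
  rcases hb₁.eq_or_lt with rfl | hb₁
  · simp [h₁ rfl]
  rcases hb₂.eq_or_lt with rfl | hb₂
  · simp [h₂ rfl]
  exact add_mul_log_div_add_le ha₁ ha₂ hb₁ hb₂

lemma klBerR_mul_le {c p q : ℝ} (hc₀ : 0 < c) (hc₁ : c ≤ 1) (hp₁ : p ≤ 1) (hq₁ : q ≤ 1)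
    (h₁ : q = 1 → p = 1) : klBerR (c * p) (c * q) ≤ c * klBerR p q := by
  have hlogsum := add_mul_log_div_add_le_of_imp (a₂ := 1 - c) (b₂ := 1 - c)
    (mul_nonneg hc₀.le (sub_nonneg.2 hp₁)) (sub_nonneg.2 hc₁)
    (mul_nonneg hc₀.le (sub_nonneg.2 hq₁)) (sub_nonneg.2 hc₁)
    (fun h ↦ by rw [h₁ (by nlinarith), sub_self, mul_zero]) id
  have hvanish : (1 - c) * log ((1 - c) / (1 - c)) = 0 := by
    rcases eq_or_ne (1 - c) 0 with h | h <;> simp [h]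
  rw [hvanish, add_zero, mul_div_mul_left _ _ hc₀.ne'] at hlogsum
  unfold klBerR
  rw [mul_div_mul_left _ _ hc₀.ne']
  calc c * p * log (p / q) + (1 - c * p) * log ((1 - c * p) / (1 - c * q))
      = c * p * log (p / q) + (c * (1 - p) + (1 - c)) *
          log ((c * (1 - p) + (1 - c)) / (c * (1 - q) + (1 - c))) := by ring_nf
    _ ≤ c * p * log (p / q) + c * (1 - p) * log ((1 - p) / (1 - q)) := by gcongr
    _ = c * (p * log (p / q) + (1 - p) * log ((1 - p) / (1 - q))) := by ring

lemma klBer_eq_top_iff {p q : ℝ} : klBer p q = ⊤ ↔ (q = 0 ∧ p ≠ 0) ∨ (q = 1 ∧ p ≠ 1) := by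
  unfold klBer
  split_ifs with h
  · simp [h]
  · simp only [h, iff_false]
    exact EReal.coe_ne_top _

lemma klBer_eq_klBerR {p q : ℝ} (h₀ : q = 0 → p = 0) (h₁ : q = 1 → p = 1) :
    klBer p q = klBerR p q := by
  unfold klBer klBerR
  rw [if_neg (by tauto)]

theorem kl_scaling_upper (c p q : ℝ) (hc : c ∈ Set.Icc (0 : ℝ) 1)
    (hp : p ∈ Set.Icc (0 : ℝ) 1) (hq : q ∈ Set.Icc (0 : ℝ) 1) :
    klBer (c * p) (c * q) ≤ (c : EReal) * klBer p q := by
  obtain ⟨hc₀, hc₁⟩ := hc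
  rcases hc₀.eq_or_lt with rfl | hc₀
  · simp [klBer]
  by_cases htop : klBer p q = ⊤
  · rw [htop, EReal.mul_top_of_pos (by exact_mod_cast hc₀)]
    exact le_top
  obtain ⟨h₀, h₁⟩ : (q = 0 → p = 0) ∧ (q = 1 → p = 1) := by
    rw [klBer_eq_top_iff] at htop
    tauto
  have h₀' (h : c * q = 0) : c * p = 0 := by
    rw [h₀ ((mul_eq_zero.1 h).resolve_left hc₀.ne'), mul_zero]
  have h₁' (h : c * q = 1) : c * p = 1 := by
    obtain ⟨rfl, rfl⟩ : c = 1 ∧ q = 1 := ⟨by nlinarith [hq.2], by nlinarith [hq.2]⟩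
    rw [h₁ rfl, one_mul]
  rw [klBer_eq_klBerR h₀ h₁, klBer_eq_klBerR h₀' h₁']
  exact_mod_cast klBerR_mul_le hc₀ hc₁ hp.2 hq.2 h₁
end

section
/- For c, p, q in [0,1], the Bernoulli KL divergence satisfies c·(1 − max(p,q))·d(p, q) ≤ d(c·p, c·q). -/
/-! For fixed `p`, the function `s ↦ d(c p, c s) - c (1 - max p q) d(p, s)` vanishes at `s = p`,
and its derivative `(s - p) (c / (s (1 - c s)) - c (1 - max p q) / (s (1 - s)))` has the sign of
`s - p` for `s` between `p` and `q`, because `(1 - max p q) (1 - c s) ≤ 1 - s` there. So the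
function grows as `s` moves from `p` to `q`, in either direction. -/

open scoped BigOperators

open Set

/-- Cross entropy minus entropy, with the logarithms split so that the dependence on `s` is
smooth for every `a`; it agrees with `klBerR a s` for `s ∉ {0, 1}`. -/
noncomputable def klBerLog (a s : ℝ) : ℝ :=
  a * Real.log a + (1 - a) * Real.log (1 - a) - (a * Real.log s + (1 - a) * Real.log (1 - s))

lemma klBerLog_self (a : ℝ) : klBerLog a a = 0 := sub_self _

lemma klBerR_eq_klBerLog (a : ℝ) {s : ℝ} (hs0 : s ≠ 0) (hs1 : s ≠ 1) :
    klBerR a s = klBerLog a s := by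
  have h₁ : a * Real.log (a / s) = a * Real.log a - a * Real.log s := by
    rcases eq_or_ne a 0 with rfl | ha
    · simp
    · rw [Real.log_div ha hs0, mul_sub]
  have h₂ : (1 - a) * Real.log ((1 - a) / (1 - s)) =
      (1 - a) * Real.log (1 - a) - (1 - a) * Real.log (1 - s) := by
    rcases eq_or_ne a 1 with rfl | ha
    · simp
    · rw [Real.log_div (sub_ne_zero.2 (Ne.symm ha)) (sub_ne_zero.2 (Ne.symm hs1)), mul_sub]
  rw [klBerR, klBerLog, h₁, h₂]
  ring

lemma hasDerivAt_klBerLog (a : ℝ) {s : ℝ} (hs0 : s ≠ 0) (hs1 : s ≠ 1) :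
    HasDerivAt (klBerLog a) ((s - a) / (s * (1 - s))) s := by
  have hs1' : 1 - s ≠ 0 := sub_ne_zero.2 (Ne.symm hs1)
  have hlog₁ : HasDerivAt (fun x => Real.log (1 - x)) ((1 - s)⁻¹ * (-1)) s :=
    (Real.hasDerivAt_log hs1').comp s ((hasDerivAt_id s).const_sub 1)
  refine ((hasDerivAt_const s (a * Real.log a + (1 - a) * Real.log (1 - a))).sub
    (((Real.hasDerivAt_log hs0).const_mul a).add (hlog₁.const_mul (1 - a)))).congr_deriv ?_
  field_simp
  ring

lemma continuousOn_const_mul_log {S : Set ℝ} {f : ℝ → ℝ} (a : ℝ) (hf : ContinuousOn f S)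
    (h : a ≠ 0 → ∀ x ∈ S, f x ≠ 0) : ContinuousOn (fun x => a * Real.log (f x)) S := by
  rcases eq_or_ne a 0 with rfl | ha
  · simpa using continuousOn_const
  · exact continuousOn_const.mul (hf.log (h ha))

lemma continuousOn_klBerLog {a b : ℝ} (ha : a ∈ Icc 0 1) (hb : b ∈ Ioo 0 1) :
    ContinuousOn (klBerLog a) (uIcc a b) := by
  refine continuousOn_const.sub ((continuousOn_const_mul_log a continuousOn_id ?_).add
    (continuousOn_const_mul_log (1 - a) (continuousOn_const.sub continuousOn_id) ?_))
  · intro ha0 x hx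
    exact (lt_of_lt_of_le (lt_min (ha.1.lt_of_ne' ha0) hb.1) hx.1).ne'
  · intro ha1 x hx
    have : x < 1 := lt_of_le_of_lt hx.2 (max_lt (ha.2.lt_of_ne (sub_ne_zero.1 ha1).symm) hb.2)
    exact sub_ne_zero.2 this.ne'

lemma le_of_hasDerivAt_of_mul_sub_nonneg {f f' : ℝ → ℝ} {a b : ℝ}
    (hf : ContinuousOn f (uIcc a b)) (hderiv : ∀ x ∈ uIoo a b, HasDerivAt f (f' x) x)
    (hsign : ∀ x ∈ uIoo a b, 0 ≤ (x - a) * f' x) : f a ≤ f b := by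
  rcases le_total a b with hab | hba
  · rw [uIcc_of_le hab] at hf
    rw [uIoo_of_le hab] at hderiv hsign
    refine monotoneOn_of_hasDerivWithinAt_nonneg (f' := f') (convex_Icc a b) hf
      (fun x hx => ?_) (fun x hx => ?_) (left_mem_Icc.2 hab) (right_mem_Icc.2 hab) hab <;>
      rw [interior_Icc] at hx
    · exact (hderiv x hx).hasDerivWithinAt
    · exact nonneg_of_mul_nonneg_right (hsign x hx) (sub_pos.2 hx.1)
  · rw [uIcc_of_ge hba] at hf
    rw [uIoo_of_ge hba] at hderiv hsign
    refine antitoneOn_of_hasDerivWithinAt_nonpos (f' := f') (convex_Icc b a) hf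
      (fun x hx => ?_) (fun x hx => ?_) (left_mem_Icc.2 hba) (right_mem_Icc.2 hba) hba <;>
      rw [interior_Icc] at hx
    · exact (hderiv x hx).hasDerivWithinAt
    · exact nonpos_of_mul_nonneg_right (hsign x hx) (sub_neg.2 hx.2)

lemma klBerLog_nonneg {a b : ℝ} (ha : a ∈ Icc 0 1) (hb : b ∈ Ioo 0 1) :
    0 ≤ klBerLog a b := by
  rw [← klBerLog_self a]
  refine le_of_hasDerivAt_of_mul_sub_nonneg (f' := fun x => (x - a) / (x * (1 - x)))
    (continuousOn_klBerLog ha hb) (fun x hx => ?_) (fun x hx => ?_)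
  all_goals obtain ⟨hx0, hx1⟩ := uIoo_subset_Ioo ha (Ioo_subset_Icc_self hb) hx
  · exact hasDerivAt_klBerLog a hx0.ne' hx1.ne
  · rw [← mul_div_assoc]
    exact div_nonneg (mul_self_nonneg _) (mul_nonneg hx0.le (sub_nonneg.2 hx1.le))

lemma mul_klBerLog_le_klBerLog_mul {c p q : ℝ} (hc0 : 0 < c) (hc1 : c ≤ 1) (hp : p ∈ Icc 0 1)
    (hq : q ∈ Ioo 0 1) : c * (1 - max p q) * klBerLog p q ≤ klBerLog (c * p) (c * q) := by
  set K := c * (1 - max p q)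
  have hcp : c * p ∈ Icc 0 1 := ⟨mul_nonneg hc0.le hp.1, mul_le_one₀ hc1 hp.1 hp.2⟩
  have hcq : c * q ∈ Ioo 0 1 :=
    ⟨mul_pos hc0 hq.1, mul_lt_one_of_nonneg_of_lt_one_right hc1 hq.1.le hq.2⟩
  have hcont : ContinuousOn (fun s => klBerLog (c * p) (c * s)) (uIcc p q) :=
    (continuousOn_klBerLog hcp hcq).comp (continuous_const_mul c).continuousOn
      (image_const_mul_uIcc c p q ▸ mapsTo_image _ _)
  suffices klBerLog (c * p) (c * p) - K * klBerLog p p ≤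
      klBerLog (c * p) (c * q) - K * klBerLog p q by
    simpa [klBerLog_self] using this
  refine le_of_hasDerivAt_of_mul_sub_nonneg
    (f := fun s => klBerLog (c * p) (c * s) - K * klBerLog p s) (f' := fun x =>
      (c * x - c * p) / (c * x * (1 - c * x)) * c - K * ((x - p) / (x * (1 - x))))
    (hcont.sub (continuousOn_const.mul (continuousOn_klBerLog hp hq)))
    (fun x hx => ?_) (fun x hx => ?_)
  all_goals obtain ⟨hx0, hx1⟩ := uIoo_subset_Ioo hp (Ioo_subset_Icc_self hq) hx
  all_goals have hcx0 : 0 < c * x := mul_pos hc0 hx0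
  all_goals have hcx1 : c * x < 1 := mul_lt_one_of_nonneg_of_lt_one_right hc1 hx0.le hx1
  · have hscaled := (hasDerivAt_klBerLog (c * p) hcx0.ne' hcx1.ne).comp x
      ((hasDerivAt_id x).const_mul c)
    rw [mul_one] at hscaled
    exact hscaled.sub ((hasDerivAt_klBerLog p hx0.ne' hx1.ne).const_mul K)
  · have hxm : x ≤ max p q := hx.2.le
    have hfactor : (1 - max p q) * (1 - c * x) ≤ 1 - x := by nlinarith
    have hfactorize : (x - p) * ((c * x - c * p) / (c * x * (1 - c * x)) * c
        - K * ((x - p) / (x * (1 - x)))) =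
        (x - p) ^ 2 * c * ((1 - x) - (1 - max p q) * (1 - c * x)) /
          (x * (1 - c * x) * (1 - x)) := by
      have : 1 - x * c ≠ 0 := by rw [mul_comm]; exact sub_ne_zero.2 hcx1.ne'
      have : 1 - x ≠ 0 := sub_ne_zero.2 hx1.ne'
      simp only [K]
      field_simp
    rw [hfactorize]
    have : 0 < 1 - c * x := sub_pos.2 hcx1
    have : 0 < 1 - x := sub_pos.2 hx1
    exact div_nonneg (by have := sub_nonneg.2 hfactor; positivity) (by positivity)

lemma klBer_eq_klBerLog (p : ℝ) {q : ℝ} (hq : q ∈ Ioo 0 1) : klBer p q = klBerLog p q := by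
  rw [klBer, if_neg (by rintro (⟨h, -⟩ | ⟨h, -⟩) <;> linarith [hq.1, hq.2]), ← klBerR,
    klBerR_eq_klBerLog p hq.1.ne' hq.2.ne]

lemma klBer_nonneg {p q : ℝ} (hp : p ∈ Icc 0 1) (hq : q ∈ Icc 0 1) : 0 ≤ klBer p q := by
  rcases hq.1.eq_or_lt with rfl | hq0
  · rcases eq_or_ne p 0 with rfl | hp0 <;> simp [klBer, *]
  rcases hq.2.eq_or_lt with rfl | hq1
  · rcases eq_or_ne p 1 with rfl | hp1 <;> simp [klBer, *]
  rw [klBer_eq_klBerLog p ⟨hq0, hq1⟩]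
  exact EReal.coe_nonneg.2 (klBerLog_nonneg hp ⟨hq0, hq1⟩)

theorem kl_scaling_lower (c p q : ℝ) (hc : c ∈ Set.Icc (0 : ℝ) 1)
    (hp : p ∈ Set.Icc (0 : ℝ) 1) (hq : q ∈ Set.Icc (0 : ℝ) 1) :
    ((c * (1 - max p q) : ℝ) : EReal) * klBer p q ≤ klBer (c * p) (c * q) := by
  rcases (mul_nonneg hc.1 (sub_nonneg.2 (max_le hp.2 hq.2))).eq_or_lt with hK | hK
  · rw [← hK, EReal.coe_zero, zero_mul]
    exact klBer_nonneg ⟨mul_nonneg hc.1 hp.1, mul_le_one₀ hc.2 hp.1 hp.2⟩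
      ⟨mul_nonneg hc.1 hq.1, mul_le_one₀ hc.2 hq.1 hq.2⟩
  have hc0 : 0 < c := pos_of_mul_pos_left hK (sub_nonneg.2 (max_le hp.2 hq.2))
  have hq1 : q < 1 := by linarith [le_max_right p q, (mul_pos_iff_of_pos_left hc0).1 hK]
  rcases hq.1.eq_or_lt with rfl | hq0
  · rcases eq_or_ne p 0 with rfl | hp0 <;> simp [klBer, *, hc0.ne']
  rw [klBer_eq_klBerLog p ⟨hq0, hq1⟩,
    klBer_eq_klBerLog (c * p)
      ⟨mul_pos hc0 hq0, mul_lt_one_of_nonneg_of_lt_one_right hc.2 hq0.le hq1⟩,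
    ← EReal.coe_mul, EReal.coe_le_coe_iff]
  exact mul_klBerLog_le_klBerLog_mul hc0 hc.2 hp ⟨hq0, hq1⟩
end

section
/- For c, p, q in [0,1], it holds that 2·c·max(c, 1 − max(p,q))·(p − q)² ≤ d(c·p, c·q). -/
open scoped BigOperators

/-!
For fixed `b ∈ (0,1)`, the map `a ↦ d(a,b)` has a critical point at `a = b` and second
derivative `1 / (a(1-a))`. So if `λ·x(1-x) ≤ 1` between `a` and `b`, then
`a ↦ d(a,b) - λ(a-b)²/2` is convex there with a critical point at `b`, whence
`λ(a-b)²/2 ≤ d(a,b)`.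

With `λ = 4` this is Pinsker's inequality, which gives `2c²(p-q)² ≤ d(cp,cq)`. With
`λ = 1/(c·m)`, where `m = max p q`, admissible because `x(1-x) ≤ x ≤ c·m`, it gives
`c(p-q)²/(2m) ≤ d(cp,cq)`, and `2c(1-m)(p-q)² ≤ c(p-q)²/(2m)` since `4m(1-m) ≤ 1`.
-/

open Real Set

theorem ConvexOn.le_of_hasDerivAt_eq_zero {S : Set ℝ} {f : ℝ → ℝ} {x y : ℝ}
    (hf : ConvexOn ℝ S f) (hx : x ∈ S) (hy : y ∈ S) (hf' : HasDerivAt f 0 x) :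
    f x ≤ f y := by
  rcases lt_trichotomy x y with hxy | rfl | hyx
  · have := hf.le_slope_of_hasDerivAt hx hy hxy hf'
    rw [slope_def_field, le_div_iff₀ (sub_pos.2 hxy)] at this
    linarith
  · rfl
  · have := hf.slope_le_of_hasDerivAt hy hx hyx hf'
    rw [slope_def_field, div_le_iff₀ (sub_pos.2 hyx)] at this
    linarith

theorem klBerR_eq_neg_binEntropy_sub {b : ℝ} (a : ℝ) (hb₀ : b ≠ 0) (hb₁ : b ≠ 1) :
    klBerR a b = -binEntropy a - a * log b - (1 - a) * log (1 - b) := by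
  have hb₁' : 1 - b ≠ 0 := sub_ne_zero.2 hb₁.symm
  have h₀ : a * log (a / b) = a * log a - a * log b := by
    rcases eq_or_ne a 0 with rfl | ha
    · simp
    · rw [log_div ha hb₀]; ring
  have h₁ : (1 - a) * log ((1 - a) / (1 - b)) =
      (1 - a) * log (1 - a) - (1 - a) * log (1 - b) := by
    rcases eq_or_ne (1 - a) 0 with ha | ha
    · simp [ha]
    · rw [log_div ha hb₁']; ring
  rw [klBerR, h₀, h₁, binEntropy, log_inv, log_inv]
  ring

theorem klBerR_self (a : ℝ) : klBerR a a = 0 := by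
  rcases eq_or_ne a 0 with rfl | h₀
  · simp [klBerR]
  rcases eq_or_ne (1 - a) 0 with h₁ | h₁
  · simp [klBerR, h₁]
  simp [klBerR, div_self h₀, div_self h₁]

theorem hasDerivAt_log_sub_log_one_sub {x : ℝ} (hx : x ∈ Ioo 0 1) :
    HasDerivAt (fun y ↦ log y - log (1 - y)) (x⁻¹ + (1 - x)⁻¹) x := by
  have := (hasDerivAt_log hx.1.ne').sub
    (((hasDerivAt_id x).const_sub 1).log (sub_pos.2 hx.2).ne')
  refine this.congr_deriv ?_
  simp only [id]
  ring

section KLMinusQuadratic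

variable {b lam : ℝ}

theorem hasDerivAt_klBerR_sub_sq (hb : b ∈ Ioo 0 1) {x : ℝ} (hx : x ∈ Ioo 0 1) :
    HasDerivAt (fun y ↦ klBerR y b - lam / 2 * (y - b) ^ 2)
      (log x - log (1 - x) - log b + log (1 - b) - lam * (x - b)) x := by
  simp only [klBerR_eq_neg_binEntropy_sub _ hb.1.ne' hb.2.ne]
  have := (((hasDerivAt_binEntropy hx.1.ne' hx.2.ne).neg.sub
    ((hasDerivAt_id x).mul_const (log b))).sub
    (((hasDerivAt_id x).const_sub 1).mul_const (log (1 - b)))).sub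
    ((((hasDerivAt_id x).sub_const b).pow 2).const_mul (lam / 2))
  refine this.congr_deriv ?_
  simp only [id]
  ring

theorem convexOn_klBerR_sub_sq {a : ℝ} (ha : a ∈ Icc 0 1) (hb : b ∈ Ioo 0 1)
    (hlam : ∀ x ∈ uIoo a b, lam * (x * (1 - x)) ≤ 1) :
    ConvexOn ℝ (uIcc a b) (fun y ↦ klBerR y b - lam / 2 * (y - b) ^ 2) := by
  have hinterior : interior (uIcc a b) = uIoo a b := interior_Icc
  have hmem : ∀ x ∈ uIoo a b, x ∈ Ioo 0 1 := fun x hx ↦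
    ⟨(le_inf ha.1 hb.1.le).trans_lt hx.1, hx.2.trans_le (sup_le ha.2 hb.2.le)⟩
  refine convexOn_of_hasDerivWithinAt2_nonneg (convex_uIcc a b)
    (f' := fun x ↦ log x - log (1 - x) - log b + log (1 - b) - lam * (x - b))
    (f'' := fun x ↦ x⁻¹ + (1 - x)⁻¹ - lam) ?_ ?_ ?_ ?_ <;> try rw [hinterior]
  · simp only [klBerR_eq_neg_binEntropy_sub _ hb.1.ne' hb.2.ne]
    exact Continuous.continuousOn (by fun_prop)
  · exact fun x hx ↦ (hasDerivAt_klBerR_sub_sq hb (hmem x hx)).hasDerivWithinAt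
  · intro x hx
    have := (((hasDerivAt_log_sub_log_one_sub (hmem x hx)).sub_const (log b)).add_const
      (log (1 - b))).sub (((hasDerivAt_id x).sub_const b).const_mul lam)
    exact (this.congr_deriv (by ring)).hasDerivWithinAt
  · intro x hx
    obtain ⟨hx₀, hx₁⟩ := hmem x hx
    have hinv : x⁻¹ + (1 - x)⁻¹ = 1 / (x * (1 - x)) := by field_simp; ring
    rw [hinv, sub_nonneg, le_div_iff₀ (by nlinarith)]
    exact hlam x hx

theorem half_mul_sq_le_klBerR {a : ℝ} (ha : a ∈ Icc 0 1) (hb : b ∈ Ioo 0 1)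
    (hlam : ∀ x ∈ uIoo a b, lam * (x * (1 - x)) ≤ 1) :
    lam / 2 * (a - b) ^ 2 ≤ klBerR a b := by
  have := (convexOn_klBerR_sub_sq ha hb hlam).le_of_hasDerivAt_eq_zero right_mem_uIcc
    left_mem_uIcc ((hasDerivAt_klBerR_sub_sq hb hb).congr_deriv (by ring))
  simp only [klBerR_self, sub_self] at this
  linarith

end KLMinusQuadratic

theorem coe_le_klBer {a b r : ℝ} (hb : b ∈ Icc 0 1) (hself : a = b → r ≤ 0)
    (hopen : b ∈ Ioo 0 1 → r ≤ klBerR a b) : (r : EReal) ≤ klBer a b := by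
  unfold klBer
  split_ifs with htop
  · exact le_top
  push Not at htop
  rw [EReal.coe_le_coe_iff]
  change r ≤ klBerR a b
  rcases hb.1.eq_or_lt with rfl | hb₀
  · rw [htop.1 rfl, klBerR_self]
    exact hself (htop.1 rfl)
  rcases hb.2.eq_or_lt with rfl | hb₁
  · rw [htop.2 rfl, klBerR_self]
    exact hself (htop.2 rfl)
  exact hopen ⟨hb₀, hb₁⟩

theorem two_mul_sq_le_klBerR {a b : ℝ} (ha : a ∈ Icc 0 1) (hb : b ∈ Ioo 0 1) :
    2 * (a - b) ^ 2 ≤ klBerR a b := by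
  have := half_mul_sq_le_klBerR (lam := 4) ha hb fun x _ ↦ by nlinarith [sq_nonneg (2 * x - 1)]
  linarith

theorem two_mul_sq_le_klBer {a b : ℝ} (ha : a ∈ Icc 0 1) (hb : b ∈ Icc 0 1) :
    ((2 * (a - b) ^ 2 : ℝ) : EReal) ≤ klBer a b :=
  coe_le_klBer hb (fun h ↦ by simp [h]) (two_mul_sq_le_klBerR ha)

theorem sq_div_le_klBerR {a b m : ℝ} (ha : a ∈ Icc 0 1) (hb : b ∈ Ioo 0 1) (ham : a ≤ m)
    (hbm : b ≤ m) : (a - b) ^ 2 / (2 * m) ≤ klBerR a b := by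
  have hm : 0 < m := hb.1.trans_le hbm
  have := half_mul_sq_le_klBerR (lam := 1 / m) ha hb fun x hx ↦ by
    have hx₀ : 0 < x := (le_inf ha.1 hb.1.le).trans_lt hx.1
    have hxm : x ≤ m := hx.2.le.trans (sup_le ham hbm)
    rw [one_div_mul_eq_div, div_le_one hm]
    nlinarith
  convert this using 1
  field_simp

theorem kl_scaling_quadratic (c p q : ℝ) (hc : c ∈ Set.Icc (0 : ℝ) 1)
    (hp : p ∈ Set.Icc (0 : ℝ) 1) (hq : q ∈ Set.Icc (0 : ℝ) 1) :
    ((2 * c * max c (1 - max p q) * (p - q) ^ 2 : ℝ) : EReal) ≤ klBer (c * p) (c * q) := by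
  obtain ⟨hc₀, hc₁⟩ := hc
  have hcp : c * p ∈ Icc 0 1 := ⟨mul_nonneg hc₀ hp.1, mul_le_one₀ hc₁ hp.1 hp.2⟩
  have hcq : c * q ∈ Icc 0 1 := ⟨mul_nonneg hc₀ hq.1, mul_le_one₀ hc₁ hq.1 hq.2⟩
  rcases le_total (1 - max p q) c with h | h
  · rw [max_eq_left h]
    convert two_mul_sq_le_klBer hcp hcq using 2
    ring
  rw [max_eq_right h]
  have hpm : c * p ≤ c * max p q := mul_le_mul_of_nonneg_left (le_max_left p q) hc₀
  have hqm : c * q ≤ c * max p q := mul_le_mul_of_nonneg_left (le_max_right p q) hc₀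
  refine coe_le_klBer hcq (fun hpq ↦ ?_) (fun hb ↦ ?_)
  · rcases mul_eq_mul_left_iff.1 hpq with rfl | rfl <;> simp
  have hm : 0 < c * max p q := hb.1.trans_le hqm
  calc 2 * c * (1 - max p q) * (p - q) ^ 2 ≤ (c * p - c * q) ^ 2 / (2 * (c * max p q)) := by
        rw [le_div_iff₀ (by positivity)]
        nlinarith [mul_nonneg (sq_nonneg (c * (p - q))) (sq_nonneg (2 * max p q - 1))]
    _ ≤ klBerR (c * p) (c * q) := sq_div_le_klBerR hcp hb hpm hqm
end

section
/- Let c ∈ [μ, 1] with μ ∈ (0,1], let u ∈ [0,1] and Δ ∈ (0, 1−u] with u + Δ/2 ≤ p_max ≤ 1, and set γ = max(μ, 1 − p_max). If X̄ is the average of N i.i.d. [0,1]-valued random variables with mean c·u, then P(X̄ > c·(u + Δ/4)) ≤ exp(−N·μ·γ·Δ²/8). -/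
/-!
The moment generating function of a `[0, 1]`-valued variable with mean `m` is at most that of a
Bernoulli(`m`) variable (convexity of `exp`), so Chernoff's bound at the optimal tilt gives
`P(S_N ≥ N a) ≤ exp (-N d(a, m))`. Since `∂²/∂a² d(a, m) = 1 / (a (1 - a))`, a local Pinsker
inequality gives `d(a, m) ≥ (a - m)² / (2 V)` for any `V` bounding `x (1 - x)` on `[m, a]`. For
`m = c u` and `a = c (u + Δ/4)` one may take `V = c / (4 max(c, 1 - u - Δ/4))`, which yields the
rate `c max(c, 1 - u - Δ/4) Δ² / 8 ≥ μ γ Δ² / 8`.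
-/

open scoped BigOperators

open Real Set MeasureTheory ProbabilityTheory
open scoped Finset

theorem monotoneOn_Icc_of_hasDerivAt_nonneg {f f' : ℝ → ℝ} {a b : ℝ}
    (hf : ∀ x ∈ Icc a b, HasDerivAt f (f' x) x) (hf' : ∀ x ∈ Icc a b, 0 ≤ f' x) :
    MonotoneOn f (Icc a b) :=
  monotoneOn_of_hasDerivWithinAt_nonneg (convex_Icc a b)
    (fun x hx => (hf x hx).continuousAt.continuousWithinAt)
    (fun x hx => (hf x (interior_subset hx)).hasDerivWithinAt)
    (fun x hx => hf' x (interior_subset hx))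

theorem hasDerivAt_log_div_const {x q : ℝ} (hx : x ≠ 0) (hq : q ≠ 0) :
    HasDerivAt (fun y => log (y / q)) x⁻¹ x := by
  convert ((hasDerivAt_id' x).div_const q).log (div_ne_zero hx hq) using 1
  field_simp

theorem hasDerivAt_log_one_sub_div_const {x q : ℝ} (hx : x ≠ 1) (hq : q ≠ 1) :
    HasDerivAt (fun y => log ((1 - y) / (1 - q))) (-(1 - x)⁻¹) x :=
  ((hasDerivAt_log_div_const (sub_ne_zero.2 hx.symm) (sub_ne_zero.2 hq.symm)).comp x
    ((hasDerivAt_id' x).const_sub 1)).congr_deriv (by ring)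

theorem hasDerivAt_klBerR_left {x q : ℝ} (hx0 : x ≠ 0) (hx1 : x ≠ 1) (hq0 : q ≠ 0) (hq1 : q ≠ 1) :
    HasDerivAt (fun y => klBerR y q) (log (x / q) - log ((1 - x) / (1 - q))) x := by
  have h1x : 1 - x ≠ 0 := sub_ne_zero.2 hx1.symm
  refine (((hasDerivAt_id' x).mul (hasDerivAt_log_div_const hx0 hq0)).add
    (((hasDerivAt_id' x).const_sub 1).mul
      (hasDerivAt_log_one_sub_div_const hx1 hq1))).congr_deriv ?_
  field_simp
  ring

/-- Local Pinsker inequality: `∂²/∂x² klBerR x q = 1 / (x (1 - x)) ≥ 1 / V` on `[q, p]`. -/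
theorem sq_div_le_klBerR_s16 {q p V : ℝ} (hq : 0 < q) (hqp : q ≤ p) (hp : p < 1)
    (hV : ∀ x ∈ Icc q p, x * (1 - x) ≤ V) : (p - q) ^ 2 / (2 * V) ≤ klBerR p q := by
  have hunit : ∀ x ∈ Icc q p, 0 < x ∧ x < 1 := fun x hx => ⟨hq.trans_le hx.1, hx.2.trans_lt hp⟩
  have hV0 : 0 < V := (mul_pos hq (by linarith)).trans_le (hV q ⟨le_rfl, hqp⟩)
  set g : ℝ → ℝ := fun x => log (x / q) - log ((1 - x) / (1 - q)) - (x - q) / V with hg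
  have hg_nonneg : ∀ x ∈ Icc q p, 0 ≤ g x := by
    have hmono : MonotoneOn g (Icc q p) := by
      refine monotoneOn_Icc_of_hasDerivAt_nonneg (f' := fun x => (x * (1 - x))⁻¹ - V⁻¹)
        (fun x hx => ?_) (fun x hx => ?_)
      · obtain ⟨hx0, hx1⟩ := hunit x hx
        refine (((hasDerivAt_log_div_const hx0.ne' hq.ne').sub
          (hasDerivAt_log_one_sub_div_const hx1.ne (by linarith))).sub
          (((hasDerivAt_id' x).sub_const q).div_const V)).congr_deriv ?_
        have : 1 - x ≠ 0 := by linarith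
        field_simp
        ring
      · obtain ⟨hx0, hx1⟩ := hunit x hx
        exact sub_nonneg.2 (inv_anti₀ (mul_pos hx0 (by linarith)) (hV x hx))
    intro x hx
    simpa [g] using hmono ⟨le_rfl, hqp⟩ hx hx.1
  have hmono : MonotoneOn (fun x => klBerR x q - (x - q) ^ 2 / (2 * V)) (Icc q p) := by
    refine monotoneOn_Icc_of_hasDerivAt_nonneg (fun x hx => ?_) hg_nonneg
    obtain ⟨hx0, hx1⟩ := hunit x hx
    refine ((hasDerivAt_klBerR_left hx0.ne' hx1.ne hq.ne' (by linarith)).sub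
      ((((hasDerivAt_id' x).sub_const q).pow 2).div_const (2 * V))).congr_deriv ?_
    simp only [hg]
    field_simp
    ring
  simpa [klBerR] using hmono ⟨le_rfl, hqp⟩ ⟨hqp, le_rfl⟩ hqp

/-- Chernoff's bound at the optimal tilt is the KL bound. -/
theorem exists_exp_neg_mul_mul_eq_exp_neg_klBerR {m a : ℝ} (hm : 0 < m) (hma : m < a)
    (ha : a < 1) : ∃ t, 0 ≤ t ∧ exp (-t * a) * (1 - m + m * exp t) = exp (-klBerR a m) := by
  have h1a : 0 < 1 - a := by linarith
  have h1m : 0 < 1 - m := by linarith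
  refine ⟨log (a / m) - log ((1 - a) / (1 - m)), ?_, ?_⟩
  · have h1 : 0 ≤ log (a / m) := log_nonneg ((one_le_div hm).2 hma.le)
    have h2 : log ((1 - a) / (1 - m)) ≤ 0 :=
      log_nonpos (div_pos h1a h1m).le ((div_le_one h1m).2 (by linarith))
    linarith
  · have hmgf : 1 - m + m * exp (log (a / m) - log ((1 - a) / (1 - m)))
        = exp (-log ((1 - a) / (1 - m))) := by
      rw [exp_sub, exp_neg, exp_log (div_pos (hm.trans hma) hm), exp_log (div_pos h1a h1m)]
      field_simp
      ring
    rw [hmgf, ← exp_add, klBerR]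
    ring_nf

theorem exp_mul_le_one_sub_add_mul_exp {x : ℝ} (hx : x ∈ Icc (0 : ℝ) 1) (t : ℝ) :
    exp (t * x) ≤ 1 - x + x * exp t := by
  have h := convexOn_exp.2 (mem_univ 0) (mem_univ t) (sub_nonneg.2 hx.2) hx.1 (by ring)
  simp only [smul_eq_mul, mul_zero, zero_add, exp_zero, mul_one] at h
  rwa [mul_comm] at h

section Chernoff

variable {Ω ι : Type*} [MeasurableSpace Ω] {P : Measure Ω} [IsProbabilityMeasure P]

theorem mgf_le_one_sub_add_mul_exp {Y : Ω → ℝ} (hY : AEMeasurable Y P)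
    (hbdd : ∀ᵐ ω ∂P, Y ω ∈ Icc (0 : ℝ) 1) (t : ℝ) :
    mgf Y P t ≤ 1 - P[Y] + P[Y] * exp t := by
  have hint : Integrable Y P := Integrable.of_mem_Icc 0 1 hY hbdd
  have hint_one_sub : Integrable (fun ω => 1 - Y ω) P := (integrable_const 1).sub hint
  calc mgf Y P t ≤ ∫ ω, (1 - Y ω + Y ω * exp t) ∂P :=
        integral_mono_ae (integrable_exp_mul_of_mem_Icc hY hbdd)
          (hint_one_sub.add (hint.mul_const _))
          (by filter_upwards [hbdd] with ω hω using exp_mul_le_one_sub_add_mul_exp hω t)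
    _ = 1 - P[Y] + P[Y] * exp t := by
        rw [integral_add hint_one_sub (hint.mul_const _),
          integral_sub (integrable_const 1) hint, integral_const, integral_mul_const,
          probReal_univ, smul_eq_mul, one_mul]

variable {X : ι → Ω → ℝ} {m : ℝ}

theorem measureReal_sum_ge_le_exp_mul_pow (hindep : iIndepFun X P)
    (hmeas : ∀ i, Measurable (X i)) (hbdd : ∀ i, ∀ᵐ ω ∂P, X i ω ∈ Icc (0 : ℝ) 1)
    (hmean : ∀ i, P[X i] = m) (s : Finset ι) (a : ℝ) {t : ℝ} (ht : 0 ≤ t) :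
    P.real {ω | #s * a ≤ ∑ i ∈ s, X i ω}
      ≤ exp (-t * (#s * a)) * (1 - m + m * exp t) ^ #s := by
  have hint : Integrable (fun ω => exp (t * (∑ i ∈ s, X i) ω)) P :=
    hindep.integrable_exp_mul_sum hmeas fun i _ => integrable_exp_mul_of_mem_Icc
      (hmeas i).aemeasurable (hbdd i)
  have hmgf : ∀ i ∈ s, mgf (X i) P t ≤ 1 - m + m * exp t := fun i _ =>
    hmean i ▸ mgf_le_one_sub_add_mul_exp (hmeas i).aemeasurable (hbdd i) t
  calc P.real {ω | #s * a ≤ ∑ i ∈ s, X i ω}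
      = P.real {ω | #s * a ≤ (∑ i ∈ s, X i) ω} := by simp only [Finset.sum_apply]
    _ ≤ exp (-t * (#s * a)) * mgf (∑ i ∈ s, X i) P t := measure_ge_le_exp_mul_mgf _ ht hint
    _ ≤ exp (-t * (#s * a)) * (1 - m + m * exp t) ^ #s := by
        rw [hindep.mgf_sum hmeas, ← Finset.prod_const]
        gcongr with i hi
        exacts [fun _ _ => mgf_nonneg, hmgf i hi]

theorem measureReal_sum_ge_le_exp_neg_klBerR (hindep : iIndepFun X P)
    (hmeas : ∀ i, Measurable (X i)) (hbdd : ∀ i, ∀ᵐ ω ∂P, X i ω ∈ Icc (0 : ℝ) 1)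
    (hmean : ∀ i, P[X i] = m) (s : Finset ι) {a : ℝ} (hm : 0 < m) (hma : m < a) (ha : a < 1) :
    P.real {ω | #s * a ≤ ∑ i ∈ s, X i ω} ≤ exp (-#s * klBerR a m) := by
  obtain ⟨t, ht, hexp⟩ := exists_exp_neg_mul_mul_eq_exp_neg_klBerR hm hma ha
  calc P.real {ω | #s * a ≤ ∑ i ∈ s, X i ω}
      ≤ exp (-t * (#s * a)) * (1 - m + m * exp t) ^ #s :=
        measureReal_sum_ge_le_exp_mul_pow hindep hmeas hbdd hmean s a ht
    _ = (exp (-t * a) * (1 - m + m * exp t)) ^ #s := by rw [mul_pow, ← exp_nat_mul]; ring_nf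
    _ = exp (-#s * klBerR a m) := by rw [hexp, ← exp_nat_mul]; ring_nf

theorem measureReal_sum_ge_le_exp_neg_sq_div (hindep : iIndepFun X P)
    (hmeas : ∀ i, Measurable (X i)) (hbdd : ∀ i, ∀ᵐ ω ∂P, X i ω ∈ Icc (0 : ℝ) 1)
    (hmean : ∀ i, P[X i] = m) (s : Finset ι) {a V : ℝ} (hm : 0 ≤ m) (hma : m < a) (ha : a < 1)
    (hV0 : 0 < V) (hV : ∀ x ∈ Icc m a, x * (1 - x) ≤ V) :
    P.real {ω | #s * a ≤ ∑ i ∈ s, X i ω} ≤ exp (-#s * ((a - m) ^ 2 / (2 * V))) := by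
  rcases hm.eq_or_lt with rfl | hm
  · -- `klBerR a 0` is a junk value, so tilt by hand
    refine (measureReal_sum_ge_le_exp_mul_pow hindep hmeas hbdd hmean s a
      (t := a / (2 * V)) (by positivity)).trans_eq ?_
    simp only [zero_mul, sub_zero, add_zero, one_pow, mul_one]
    congr 1
    field_simp
  · refine (measureReal_sum_ge_le_exp_neg_klBerR hindep hmeas hbdd hmean s hm hma ha).trans ?_
    rw [neg_mul, neg_mul]
    gcongr
    exact sq_div_le_klBerR_s16 hm hma.le ha hV

end Chernoff

/-- The variance form of the scaling inequality `d(c a, c b) ≥ 2 c max(c, 1 - a) (a - b)²`. -/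
theorem four_mul_max_mul_mul_one_sub_le {c b x : ℝ} (hc : 0 ≤ c) (hb : b ≤ 1) (hx0 : 0 ≤ x)
    (hxb : x ≤ c * b) : 4 * max c (1 - b) * (x * (1 - x)) ≤ c := by
  rcases le_total c (1 - b) with h | h
  · rw [max_eq_right h]
    nlinarith [mul_nonneg hc (sq_nonneg (2 * b - 1)),
      mul_le_mul_of_nonneg_left hxb (by linarith : 0 ≤ 1 - b),
      mul_le_mul_of_nonneg_left (by nlinarith : x * (1 - x) ≤ x) (by linarith : 0 ≤ 4 * (1 - b))]
  · rw [max_eq_left h]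
    nlinarith [sq_nonneg (2 * x - 1)]

theorem natCast_mul_le_of_lt_inv_mul {n : ℕ} {a s : ℝ} (ha : 0 ≤ a) (h : a < (n : ℝ)⁻¹ * s) :
    n * a ≤ s := by
  rcases n.eq_zero_or_pos with rfl | hn
  · simp only [CharP.cast_eq_zero, inv_zero, zero_mul] at h
    linarith
  · exact ((lt_inv_mul_iff₀ (Nat.cast_pos.2 hn)).1 h).le

open MeasureTheory ProbabilityTheory in
theorem chernoff_scaled_gap_bound_general {Ω : Type*} [MeasurableSpace Ω] (P : Measure Ω)
    [IsProbabilityMeasure P] (X : ℕ → Ω → ℝ) (μ c u Δ pmax γ : ℝ)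
    (hμ : μ ∈ Set.Ioc (0 : ℝ) 1) (hc : c ∈ Set.Icc μ 1)
    (hu : u ∈ Set.Icc (0 : ℝ) 1) (hΔ : Δ ∈ Set.Ioc 0 (1 - u))
    (hpmax : u + Δ / 2 ≤ pmax)
    (hγ : γ = max μ (1 - pmax))
    (hmeas : ∀ i, Measurable (X i))
    (hindep : iIndepFun X P)
    (hbdd : ∀ i, ∀ᵐ ω ∂P, X i ω ∈ Set.Icc (0 : ℝ) 1)
    (hmean : ∀ i, ∫ ω, X i ω ∂P = c * u)
    (N : ℕ) :
    P {ω | c * (u + Δ / 4) < (N : ℝ)⁻¹ * ∑ i ∈ Finset.range N, X i ω}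
      ≤ ENNReal.ofReal (Real.exp (-(N : ℝ) * μ * γ * Δ ^ 2 / 8)) := by
  obtain ⟨hμ0, -⟩ := hμ
  obtain ⟨hμc, hc1⟩ := hc
  obtain ⟨hu0, -⟩ := hu
  obtain ⟨hΔ0, hΔu⟩ := hΔ
  have hc0 : 0 < c := hμ0.trans_le hμc
  set M := max c (1 - (u + Δ / 4))
  have hM : 0 < M := hc0.trans_le (le_max_left _ _)
  have hvar : ∀ x ∈ Set.Icc (c * u) (c * (u + Δ / 4)), x * (1 - x) ≤ c / (4 * M) := fun x hx =>
    (le_div_iff₀' (by positivity)).2 <| four_mul_max_mul_mul_one_sub_le hc0.le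
      (by linarith) ((mul_nonneg hc0.le hu0).trans hx.1) hx.2
  have hbound := measureReal_sum_ge_le_exp_neg_sq_div hindep hmeas hbdd hmean (Finset.range N)
    (mul_nonneg hc0.le hu0) (by nlinarith) (by nlinarith) (by positivity) hvar
  have hgap : (c * (u + Δ / 4) - c * u) ^ 2 / (2 * (c / (4 * M))) = c * M * Δ ^ 2 / 8 := by
    field_simp
    ring
  have hrate : μ * γ ≤ c * M :=
    mul_le_mul hμc (hγ ▸ max_le_max hμc (by linarith)) (hγ ▸ hμ0.le.trans (le_max_left _ _)) hc0.le
  rw [ENNReal.le_ofReal_iff_toReal_le (measure_ne_top _ _) (exp_nonneg _)]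
  calc (P _).toReal
      ≤ P.real {ω | N * (c * (u + Δ / 4)) ≤ ∑ i ∈ Finset.range N, X i ω} :=
        measureReal_mono fun ω => natCast_mul_le_of_lt_inv_mul (by positivity)
    _ ≤ exp (-N * (c * M * Δ ^ 2 / 8)) := by simpa only [Finset.card_range, hgap] using hbound
    _ ≤ exp (-N * μ * γ * Δ ^ 2 / 8) := by
        rw [exp_le_exp]
        nlinarith [mul_le_mul_of_nonneg_left hrate (by positivity : (0 : ℝ) ≤ N * Δ ^ 2)]

open MeasureTheory ProbabilityTheory in
theorem chernoff_scaled_gap_bound {Ω : Type*} [MeasurableSpace Ω] (P : Measure Ω)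
    [IsProbabilityMeasure P] (X : ℕ → Ω → ℝ) (μ c u Δ pmax γ : ℝ)
    (hμ : μ ∈ Set.Ioc (0 : ℝ) 1) (hc : c ∈ Set.Icc μ 1)
    (hu : u ∈ Set.Icc (0 : ℝ) 1) (hΔ : Δ ∈ Set.Ioc 0 (1 - u))
    (hpmax : u + Δ / 2 ≤ pmax) (hpmax1 : pmax ≤ 1)
    (hγ : γ = max μ (1 - pmax))
    (hmeas : ∀ i, Measurable (X i))
    (hindep : iIndepFun X P)
    (hident : ∀ i, IdentDistrib (X i) (X 0) P P)
    (hbdd : ∀ i, ∀ᵐ ω ∂P, X i ω ∈ Set.Icc (0 : ℝ) 1)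
    (hmean : ∀ i, ∫ ω, X i ω ∂P = c * u)
    (N : ℕ) (hN : 0 < N) :
    P {ω | c * (u + Δ / 4) < (N : ℝ)⁻¹ * ∑ i ∈ Finset.range N, X i ω}
      ≤ ENNReal.ofReal (Real.exp (-(N : ℝ) * μ * γ * Δ ^ 2 / 8)) :=
  chernoff_scaled_gap_bound_general P X μ c u Δ pmax γ hμ hc hu hΔ hpmax hγ hmeas hindep hbdd hmean
    N
end
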